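/- arXiv:2104.02816 — 3 statements merged into one kernel-verified Lean document; each statement's English description precedes it below -/
import Mathlib

section
/- Let X be a Hilbert space and let E, F be Banach spaces. Let K : X → E and L : X → F be bounded linear operators and assume that L is surjective. Then the restriction K|_{ker L} : ker L → E and the operator K ⊕ L : X → E ⊕ F, u ↦ (Ku, Lu), have equal index. -/
/-- A bounded linear operator between Banach spaces is *Fredholm* if its kernel is
finite-dimensional and its range is closed and of finite codimension. -/
def IsFredholm {E F : Type*} [NormedAddCommGroup E] [NormedSpace ℂ E]
    [NormedAddCommGroup F] [NormedSpace ℂ F] (T : E →L[ℂ] F) : Prop :=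
  FiniteDimensional ℂ (LinearMap.ker (T : E →ₗ[ℂ] F)) ∧ IsClosed (LinearMap.range (T : E →ₗ[ℂ] F) : Set F) ∧
    FiniteDimensional ℂ (F ⧸ LinearMap.range (T : E →ₗ[ℂ] F))

/-- The index of a (Fredholm) operator: `dim ker T - codim ran T`. -/
noncomputable def fredholmIndex {E F : Type*} [NormedAddCommGroup E] [NormedSpace ℂ E]
    [NormedAddCommGroup F] [NormedSpace ℂ F] (T : E →L[ℂ] F) : ℤ :=
  (Module.finrank ℂ (LinearMap.ker (T : E →ₗ[ℂ] F)) : ℤ) - (Module.finrank ℂ (F ⧸ LinearMap.range (T : E →ₗ[ℂ] F)) : ℤ)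

/-- Two bounded operators *have equal index* if either both are Fredholm with the same
index, or neither is Fredholm. -/
def EqualIndex {E F E' F' : Type*} [NormedAddCommGroup E] [NormedSpace ℂ E]
    [NormedAddCommGroup F] [NormedSpace ℂ F] [NormedAddCommGroup E'] [NormedSpace ℂ E']
    [NormedAddCommGroup F'] [NormedSpace ℂ F'] (T : E →L[ℂ] F) (S : E' →L[ℂ] F') : Prop :=
  (IsFredholm T ∧ IsFredholm S ∧ fredholmIndex T = fredholmIndex S) ∨
    (¬ IsFredholm T ∧ ¬ IsFredholm S)

/-!
A vector `x` lies in `ker L` exactly when `(K ⊕ L) x ∈ E × 0`. Hence `K|_{ker L}` and `K ⊕ L` have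
the same kernel, and the range of `K|_{ker L}` is the preimage of the range of `K ⊕ L` under
`ι : e ↦ (e, 0)`. As `L` is onto, `E × F = ι E + ran (K ⊕ L)`, so `ι` induces an isomorphism of the
cokernels. For closedness of the ranges, the Hilbert structure provides a bounded right inverse `S`
of `L`, and `ran (K ⊕ L)` is the preimage of `ran K|_{ker L}` under `(e, f) ↦ e - K S f`.
-/

open Function LinearMap

theorem ContinuousLinearMap.hasRightInverse_of_surjective {𝕜 X F : Type*} [RCLike 𝕜]
    [NormedAddCommGroup X] [InnerProductSpace 𝕜 X] [CompleteSpace X]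
    [NormedAddCommGroup F] [NormedSpace 𝕜 F] [CompleteSpace F] (L : X →L[𝕜] F)
    (hL : Surjective L) : L.HasRightInverse := by
  have : CompleteSpace L.ker := L.isClosed_ker.completeSpace_coe
  -- `x ↦ (L x, P x)`, with `P` the orthogonal projection onto `ker L`, is an isomorphism.
  let e := L.equivProdOfSurjectiveOfIsCompl L.ker.orthogonalProjectionOnto
    (range_eq_top.2 hL) (Submodule.range_projectionOntoL _)
    (by simpa using L.ker.isCompl_orthogonal)
  exact ⟨e.symm.toContinuousLinearMap.comp (.inl 𝕜 F L.ker),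
    fun y => congrArg Prod.fst (e.apply_symm_apply (y, 0))⟩

namespace LinearMap

variable {R X E F : Type*} [Ring R] [AddCommGroup X] [Module R X] [AddCommGroup E] [Module R E]
  [AddCommGroup F] [Module R F] (K : X →ₗ[R] E) (L : X →ₗ[R] F)

def kerCompSubtypeKerEquivKerProd : ker (K ∘ₗ (ker L).subtype) ≃ₗ[R] ker (K.prod L) where
  toFun x := ⟨x.1, by rw [ker_prod]; exact ⟨x.2, x.1.2⟩⟩
  invFun y := by
    have hy : (y : X) ∈ ker K ⊓ ker L := ker_prod K L ▸ y.2
    exact ⟨⟨y, hy.2⟩, hy.1⟩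
  map_add' _ _ := rfl
  map_smul' _ _ := rfl
  left_inv _ := rfl
  right_inv _ := rfl

theorem range_comp_subtype_ker_eq_comap_inl :
    range (K ∘ₗ (ker L).subtype) = (range (K.prod L)).comap (inl R E F) := by
  ext e
  constructor
  · rintro ⟨⟨x, hx⟩, rfl⟩
    exact ⟨x, Prod.ext rfl (mem_ker.1 hx)⟩
  · rintro ⟨x, hx⟩
    exact ⟨⟨x, mem_ker.2 congr(Prod.snd $hx)⟩, congr(Prod.fst $hx)⟩

theorem range_prod_eq_comap_of_rightInverse {S : F →ₗ[R] X} (hS : RightInverse S L) :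
    range (K.prod L) = (range (K ∘ₗ (ker L).subtype)).comap (fst R E F - K ∘ₗ S ∘ₗ snd R E F) := by
  ext ⟨e, f⟩
  constructor
  · rintro ⟨x, hx⟩
    obtain ⟨rfl, rfl⟩ := Prod.ext_iff.1 hx
    exact ⟨⟨x - S (L x), by simp [hS (L x)]⟩, by simp⟩
  · rintro ⟨⟨x, hx⟩, hxe⟩
    refine ⟨x + S f, Prod.ext ?_ ?_⟩
    · simpa [eq_sub_iff_add_eq] using hxe
    · simpa [hS f] using hx

noncomputable def quotRangeCompSubtypeKerEquivQuotRangeProd (hL : Surjective L) :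
    (E ⧸ range (K ∘ₗ (ker L).subtype)) ≃ₗ[R] (E × F) ⧸ range (K.prod L) :=
  let φ := (range (K.prod L)).mkQ ∘ₗ inl R E F
  have hker : ker φ = range (K ∘ₗ (ker L).subtype) := by
    rw [ker_comp, Submodule.ker_mkQ, range_comp_subtype_ker_eq_comap_inl]
  have hφ : Surjective φ := by
    intro y
    obtain ⟨⟨e, f⟩, rfl⟩ := Submodule.mkQ_surjective _ y
    obtain ⟨x, rfl⟩ := hL f
    exact ⟨e - K x, (Submodule.Quotient.eq _).2 ⟨-x, by simp⟩⟩
  (Submodule.quotEquivOfEq _ _ hker.symm).trans (φ.quotKerEquivOfSurjective hφ)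

end LinearMap

namespace ContinuousLinearMap

variable {R X E F : Type*} [Ring R] [TopologicalSpace X] [AddCommGroup X] [Module R X]
  [TopologicalSpace E] [AddCommGroup E] [Module R E] [TopologicalSpace F] [AddCommGroup F]
  [Module R F]

theorem isClosed_range_comp_subtypeL_ker_iff [ContinuousSub E] (K : X →L[R] E) {L : X →L[R] F}
    (hL : L.HasRightInverse) :
    IsClosed (range (K.comp (ker (L : X →ₗ[R] F)).subtypeL : ker (L : X →ₗ[R] F) →ₗ[R] E) : Set E) ↔
      IsClosed (range (K.prod L : X →ₗ[R] E × F) : Set (E × F)) := by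
  obtain ⟨S, hS⟩ := hL
  rw [toLinearMap_comp, Submodule.toLinearMap_subtypeL, ContinuousLinearMap.coe_prod]
  constructor
  · intro h
    rw [range_prod_eq_comap_of_rightInverse (K : X →ₗ[R] E) (L : X →ₗ[R] F) (S := S) hS,
      Submodule.comap_coe]
    exact h.preimage (continuous_fst.sub (K.continuous.comp (S.continuous.comp continuous_snd)))
  · intro h
    rw [range_comp_subtype_ker_eq_comap_inl, Submodule.comap_coe]
    exact h.preimage (inl R E F).continuous

end ContinuousLinearMap

theorem EqualIndex.of_isFredholm_iff {E F E' F' : Type*} [NormedAddCommGroup E] [NormedSpace ℂ E]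
    [NormedAddCommGroup F] [NormedSpace ℂ F] [NormedAddCommGroup E'] [NormedSpace ℂ E']
    [NormedAddCommGroup F'] [NormedSpace ℂ F'] {T : E →L[ℂ] F} {S : E' →L[ℂ] F'}
    (h : IsFredholm T ↔ IsFredholm S) (h_index : fredholmIndex T = fredholmIndex S) :
    EqualIndex T S := by
  by_cases hT : IsFredholm T
  · exact .inl ⟨hT, h.1 hT, h_index⟩
  · exact .inr ⟨hT, mt h.2 hT⟩

section Restriction

variable {X E F : Type*} [NormedAddCommGroup X] [NormedSpace ℂ X] [NormedAddCommGroup E]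
  [NormedSpace ℂ E] [NormedAddCommGroup F] [NormedSpace ℂ F] (K : X →L[ℂ] E) {L : X →L[ℂ] F}

theorem isFredholm_comp_subtypeL_ker_iff (hL : L.HasRightInverse) :
    IsFredholm (K.comp (ker (L : X →ₗ[ℂ] F)).subtypeL) ↔ IsFredholm (K.prod L) :=
  and_congr
    (Module.Finite.equiv_iff <| kerCompSubtypeKerEquivKerProd (K : X →ₗ[ℂ] E) L.toLinearMap) <|
    and_congr (K.isClosed_range_comp_subtypeL_ker_iff hL) <| Module.Finite.equiv_iff <|
      quotRangeCompSubtypeKerEquivQuotRangeProd (K : X →ₗ[ℂ] E) L.toLinearMap hL.surjective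

theorem fredholmIndex_comp_subtypeL_ker (hL : Surjective L) :
    fredholmIndex (K.comp (ker (L : X →ₗ[ℂ] F)).subtypeL) = fredholmIndex (K.prod L) :=
  congrArg₂ (fun m n : ℕ => (m : ℤ) - n)
    (kerCompSubtypeKerEquivKerProd (K : X →ₗ[ℂ] E) L.toLinearMap).finrank_eq
    (quotRangeCompSubtypeKerEquivQuotRangeProd (K : X →ₗ[ℂ] E) L.toLinearMap hL).finrank_eq

end Restriction

theorem statement0_general
    {X E F : Type*} [NormedAddCommGroup X] [InnerProductSpace ℂ X] [CompleteSpace X]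
    [NormedAddCommGroup E] [NormedSpace ℂ E]
    [NormedAddCommGroup F] [NormedSpace ℂ F] [CompleteSpace F]
    (K : X →L[ℂ] E) (L : X →L[ℂ] F) (hL : Function.Surjective L) :
    EqualIndex (K.comp (Submodule.subtypeL (LinearMap.ker (L : X →ₗ[ℂ] F)))) (K.prod L) :=
  .of_isFredholm_iff (isFredholm_comp_subtypeL_ker_iff K (L.hasRightInverse_of_surjective hL))
    (fredholmIndex_comp_subtypeL_ker K hL)

/-- Lemma A.1 (Bär–Ballmann): if `L : X → F` is a surjective bounded operator from a Hilbert
space and `K : X → E` is bounded, then `K|_{ker L}` and `K ⊕ L` have equal index. -/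
theorem statement0
    {X E F : Type*} [NormedAddCommGroup X] [InnerProductSpace ℂ X] [CompleteSpace X]
    [NormedAddCommGroup E] [NormedSpace ℂ E] [CompleteSpace E]
    [NormedAddCommGroup F] [NormedSpace ℂ F] [CompleteSpace F]
    (K : X →L[ℂ] E) (L : X →L[ℂ] F) (hL : Function.Surjective L) :
    EqualIndex (K.comp (Submodule.subtypeL (LinearMap.ker (L : X →ₗ[ℂ] F)))) (K.prod L) :=
  statement0_general K L hL
end

section
/- Under the stated assumptions, the block component W^{−−} : H₋⁻ → H₊⁻ of W and the operator ϱ restricted to ker P, i.e. ϱ|_{ker P} : ker P → H₋⁺ ⊕ H₊⁻, have equal index. -/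
/-- The block component `π ∘ W |_q : q → ran π` of a bounded operator `W : H₋ → H₊`. -/
noncomputable def blockComponent {Hm Hp : Type*}
    [NormedAddCommGroup Hm] [NormedSpace ℂ Hm] [NormedAddCommGroup Hp] [NormedSpace ℂ Hp]
    (π : Hp →L[ℂ] Hp) (W : Hm →L[ℂ] Hp) (q : Submodule ℂ Hm) :
    q →L[ℂ] LinearMap.range (π : Hp →ₗ[ℂ] Hp) :=
  ContinuousLinearMap.codRestrict ((π.comp W).comp (Submodule.subtypeL q))
    (LinearMap.range (π : Hp →ₗ[ℂ] Hp)) (fun x => LinearMap.mem_range_self (π : Hp →ₗ[ℂ] Hp) (W x))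

/-- The operator `W := ϱ₊ ∘ ϱ₋⁻¹ : H₋ → H₊`, where `ϱ₋⁻¹ : H₋ → ker P ⊆ X` is the inverse
of the isomorphism `rm = ϱ₋|_{ker P} : ker P ≃ H₋`. -/
noncomputable def Wop {X Y Hp Hm : Type*}
    [NormedAddCommGroup X] [NormedSpace ℂ X] [NormedAddCommGroup Y] [NormedSpace ℂ Y]
    [NormedAddCommGroup Hp] [NormedSpace ℂ Hp] [NormedAddCommGroup Hm] [NormedSpace ℂ Hm]
    (P : X →L[ℂ] Y) (ϱp : X →L[ℂ] Hp) (rm : (LinearMap.ker (P : X →ₗ[ℂ] Y)) ≃L[ℂ] Hm) :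
    Hm →L[ℂ] Hp :=
  (ϱp.comp (Submodule.subtypeL (LinearMap.ker (P : X →ₗ[ℂ] Y)))).comp
    (rm.symm : Hm →L[ℂ] LinearMap.ker (P : X →ₗ[ℂ] Y))

/-- The operator `ϱ := (π₋⁺ϱ₋) ⊕ (π₊⁻ϱ₊) : X → H₋⁺ ⊕ H₊⁻`. -/
noncomputable def rhoOp {X Hp Hm : Type*}
    [NormedAddCommGroup X] [NormedSpace ℂ X]
    [NormedAddCommGroup Hp] [NormedSpace ℂ Hp] [NormedAddCommGroup Hm] [NormedSpace ℂ Hm]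
    (ϱm : X →L[ℂ] Hm) (ϱp : X →L[ℂ] Hp) (πmp : Hm →L[ℂ] Hm) (πpm : Hp →L[ℂ] Hp) :
    X →L[ℂ] (LinearMap.range (πmp : Hm →ₗ[ℂ] Hm) × LinearMap.range (πpm : Hp →ₗ[ℂ] Hp)) :=
  (ContinuousLinearMap.codRestrict (πmp.comp ϱm) (LinearMap.range (πmp : Hm →ₗ[ℂ] Hm))
      (fun x => LinearMap.mem_range_self (πmp : Hm →ₗ[ℂ] Hm) (ϱm x))).prod
    (ContinuousLinearMap.codRestrict (πpm.comp ϱp) (LinearMap.range (πpm : Hp →ₗ[ℂ] Hp))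
      (fun x => LinearMap.mem_range_self (πpm : Hp →ₗ[ℂ] Hp) (ϱp x)))

/-! Decompose `H₋ = H₋⁺ ⊕ H₋⁻` and identify `ker P` with `H₋` through `ϱ₋`. In these coordinates
`ϱ|_{ker P}` is the block lower-triangular operator `(a, b) ↦ (a, W⁻⁺ a + W⁻⁻ b)` into `H₋⁺ ⊕ H₊⁻`,
i.e. a shear composed with `id ⊕ W⁻⁻`. Neither composing with isomorphisms nor adding an identity
summand changes the kernel, the cokernel or the closedness of the range. -/

namespace EqualIndex

variable {E F E' F' E'' F'' G : Type*}
  [NormedAddCommGroup E] [NormedSpace ℂ E] [NormedAddCommGroup F] [NormedSpace ℂ F]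
  [NormedAddCommGroup E'] [NormedSpace ℂ E'] [NormedAddCommGroup F'] [NormedSpace ℂ F']
  [NormedAddCommGroup E''] [NormedSpace ℂ E''] [NormedAddCommGroup F''] [NormedSpace ℂ F'']
  [NormedAddCommGroup G] [NormedSpace ℂ G]

theorem of_linearEquiv {T : E →L[ℂ] F} {S : E' →L[ℂ] F'}
    (eker : LinearMap.ker (T : E →ₗ[ℂ] F) ≃ₗ[ℂ] LinearMap.ker (S : E' →ₗ[ℂ] F'))
    (hclosed : IsClosed (LinearMap.range (T : E →ₗ[ℂ] F) : Set F) ↔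
      IsClosed (LinearMap.range (S : E' →ₗ[ℂ] F') : Set F'))
    (ecoker : (F ⧸ LinearMap.range (T : E →ₗ[ℂ] F)) ≃ₗ[ℂ] (F' ⧸ LinearMap.range (S : E' →ₗ[ℂ] F'))) :
    EqualIndex T S := by
  have hfredholm : IsFredholm T ↔ IsFredholm S :=
    and_congr (Module.Finite.equiv_iff eker) (and_congr hclosed (Module.Finite.equiv_iff ecoker))
  have hindex : fredholmIndex T = fredholmIndex S := by
    rw [fredholmIndex, fredholmIndex, eker.finrank_eq, ecoker.finrank_eq]
  by_cases hT : IsFredholm T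
  · exact Or.inl ⟨hT, hfredholm.mp hT, hindex⟩
  · exact Or.inr ⟨hT, hfredholm.not.mp hT⟩

theorem trans {T : E →L[ℂ] F} {S : E' →L[ℂ] F'} {R : E'' →L[ℂ] F''}
    (hTS : EqualIndex T S) (hSR : EqualIndex S R) : EqualIndex T R := by
  rcases hTS with ⟨hT, hS, hTS⟩ | ⟨hT, hS⟩ <;> rcases hSR with ⟨hS', hR, hSR⟩ | ⟨hS', hR⟩
  · exact Or.inl ⟨hT, hR, hTS.trans hSR⟩
  · exact absurd hS hS'
  · exact absurd hS' hS
  · exact Or.inr ⟨hT, hR⟩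

theorem comp_equiv (T : E →L[ℂ] F) (e : E' ≃L[ℂ] E) :
    EqualIndex T (T.comp (e : E' →L[ℂ] E)) := by
  have hker : LinearMap.ker ((T.comp (e : E' →L[ℂ] E) : E' →L[ℂ] F) : E' →ₗ[ℂ] F) =
      (LinearMap.ker (T : E →ₗ[ℂ] F)).comap (e.toLinearEquiv : E' →ₗ[ℂ] E) :=
    LinearMap.ker_comp _ _
  have hrange : LinearMap.range (T : E →ₗ[ℂ] F) =
      LinearMap.range ((T.comp (e : E' →L[ℂ] E) : E' →L[ℂ] F) : E' →ₗ[ℂ] F) :=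
    (LinearEquiv.range_comp e.toLinearEquiv _).symm
  refine of_linearEquiv
    ((e.toLinearEquiv.ofSubmodule' _).symm.trans (LinearEquiv.ofEq _ _ hker.symm))
    (by rw [hrange]) (Submodule.quotEquivOfEq _ _ hrange)

theorem equiv_comp (T : E →L[ℂ] F) (e : F ≃L[ℂ] F') :
    EqualIndex T ((e : F →L[ℂ] F').comp T) := by
  have hker : LinearMap.ker (T : E →ₗ[ℂ] F) =
      LinearMap.ker (((e : F →L[ℂ] F').comp T : E →L[ℂ] F') : E →ₗ[ℂ] F') :=
    (LinearEquiv.ker_comp e.toLinearEquiv _).symm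
  have hrange : (LinearMap.range (T : E →ₗ[ℂ] F)).map (e.toLinearEquiv : F →ₗ[ℂ] F') =
      LinearMap.range (((e : F →L[ℂ] F').comp T : E →L[ℂ] F') : E →ₗ[ℂ] F') :=
    (LinearMap.range_comp _ _).symm
  refine of_linearEquiv (LinearEquiv.ofEq _ _ hker) ?_
    (Submodule.Quotient.equiv _ _ e.toLinearEquiv hrange)
  rw [← hrange, Submodule.map_coe]
  exact e.toHomeomorph.isClosed_image.symm

theorem id_prodMap (S : E →L[ℂ] F) :
    EqualIndex S ((ContinuousLinearMap.id ℂ G).prodMap S) := by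
  set M := (ContinuousLinearMap.id ℂ G).prodMap S
  have hker : (LinearMap.ker (S : E →ₗ[ℂ] F)).map (LinearMap.inr ℂ G E) =
      LinearMap.ker (M : G × E →ₗ[ℂ] G × F) := by
    rw [ContinuousLinearMap.coe_prodMap, LinearMap.ker_prodMap, Submodule.map_inr]
    simp
  have hrange : LinearMap.range (M : G × E →ₗ[ℂ] G × F) =
      (LinearMap.range (S : E →ₗ[ℂ] F)).comap (LinearMap.snd ℂ G F) := by
    rw [ContinuousLinearMap.coe_prodMap, LinearMap.range_prodMap]
    ext
    simp
  let toCoker := (LinearMap.range (S : E →ₗ[ℂ] F)).mkQ.comp (LinearMap.snd ℂ G F)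
  have htoCoker : LinearMap.ker toCoker = LinearMap.range (M : G × E →ₗ[ℂ] G × F) := by
    rw [hrange, LinearMap.ker_comp, Submodule.ker_mkQ]
  refine of_linearEquiv
    ((Submodule.equivMapOfInjective _ LinearMap.inr_injective _).trans (LinearEquiv.ofEq _ _ hker))
    ?_ ((toCoker.quotKerEquivOfSurjective
      ((Submodule.mkQ_surjective _).comp Prod.snd_surjective)).symm ≪≫ₗ
        Submodule.quotEquivOfEq _ _ htoCoker)
  rw [hrange, Submodule.comap_coe]
  exact isQuotientMap_snd.isClosed_preimage.symm

end EqualIndex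

section BlockOperators

variable {E F G : Type*}
  [NormedAddCommGroup E] [NormedSpace ℂ E] [NormedAddCommGroup F] [NormedSpace ℂ F]
  [NormedAddCommGroup G] [NormedSpace ℂ G]

def lowerTriangular (B : G →L[ℂ] F) (R : E →L[ℂ] F) : G × E →L[ℂ] G × F :=
  (ContinuousLinearMap.fst ℂ G E).prod
    (B.comp (ContinuousLinearMap.fst ℂ G E) + R.comp (ContinuousLinearMap.snd ℂ G E))

theorem equalIndex_lowerTriangular (B : G →L[ℂ] F) (R : E →L[ℂ] F) :
    EqualIndex R (lowerTriangular B R) := by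
  have hfactor : lowerTriangular B R =
      (ContinuousLinearEquiv.skewProd (.refl ℂ G) (.refl ℂ F) B : G × F →L[ℂ] G × F).comp
        ((ContinuousLinearMap.id ℂ G).prodMap R) := by
    ext <;> simp [lowerTriangular, add_comm]
  rw [hfactor]
  exact (EqualIndex.id_prodMap R).trans (EqualIndex.equiv_comp _ _)

end BlockOperators

namespace ContinuousLinearMap

variable {E : Type*} [NormedAddCommGroup E] [NormedSpace ℂ E]

def rangeProdRangeEquiv (p q : E →L[ℂ] E) (hp : p.comp p = p)
    (hpq : p + q = ContinuousLinearMap.id ℂ E) :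
    (LinearMap.range (p : E →ₗ[ℂ] E) × LinearMap.range (q : E →ₗ[ℂ] E)) ≃L[ℂ] E :=
  .equivOfInverse
    ((Submodule.subtypeL _).coprod (Submodule.subtypeL _))
    ((p.codRestrict _ fun x => LinearMap.mem_range_self (p : E →ₗ[ℂ] E) x).prod
      (q.codRestrict _ fun x => LinearMap.mem_range_self (q : E →ₗ[ℂ] E) x))
    (by
      have hpp (x : E) : p (p x) = p x := congr($hp x)
      have hq (x : E) : q x = x - p x := eq_sub_of_add_eq' (by simpa using congr($hpq x))
      rintro ⟨⟨_, a, rfl⟩, ⟨_, b, rfl⟩⟩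
      ext <;> simp [hq, hpp])
    (fun x => by simpa using congr($hpq x))

end ContinuousLinearMap

theorem statement4_general
    {X Y Hp Hm : Type*}
    [NormedAddCommGroup X] [InnerProductSpace ℂ X]
    [NormedAddCommGroup Y] [NormedSpace ℂ Y]
    [NormedAddCommGroup Hp] [NormedSpace ℂ Hp]
    [NormedAddCommGroup Hm] [NormedSpace ℂ Hm]
    (πpm : Hp →L[ℂ] Hp) (πmp πmm : Hm →L[ℂ] Hm)
    (hπmp : πmp.comp πmp = πmp)
    (hπm : πmp + πmm = ContinuousLinearMap.id ℂ Hm)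
    (P : X →L[ℂ] Y) (ϱp : X →L[ℂ] Hp) (ϱm : X →L[ℂ] Hm)
    (rm : (LinearMap.ker (P : X →ₗ[ℂ] Y)) ≃L[ℂ] Hm)
    (hrm : ∀ u : LinearMap.ker (P : X →ₗ[ℂ] Y), rm u = ϱm u) :
    EqualIndex
      (blockComponent πpm (Wop P ϱp rm) (LinearMap.range (πmm : Hm →ₗ[ℂ] Hm)))
      ((rhoOp ϱm ϱp πmp πpm).comp (Submodule.subtypeL (LinearMap.ker (P : X →ₗ[ℂ] Y)))) := by
  set W := Wop P ϱp rm
  let e := (ContinuousLinearMap.rangeProdRangeEquiv πmp πmm hπmp hπm).trans rm.symm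
  have hfactor : (rhoOp ϱm ϱp πmp πpm).comp (Submodule.subtypeL (LinearMap.ker (P : X →ₗ[ℂ] Y))) =
      (lowerTriangular (blockComponent πpm W (LinearMap.range (πmp : Hm →ₗ[ℂ] Hm)))
        (blockComponent πpm W (LinearMap.range (πmm : Hm →ₗ[ℂ] Hm)))).comp (e.symm : _ →L[ℂ] _) := by
    ext v
    · show πmp (ϱm v) = πmp (rm v)
      rw [hrm]
    · show πpm (ϱp v) = πpm (W (πmp (rm v))) + πpm (W (πmm (rm v)))
      have hsplit : πmp (rm v) + πmm (rm v) = rm v := congr($hπm (rm v))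
      rw [← map_add, ← map_add, hsplit]
      simp [W, Wop]
  rw [hfactor]
  exact (equalIndex_lowerTriangular _ _).trans (EqualIndex.comp_equiv _ _)

/-- The block component `W⁻⁻ : H₋⁻ → H₊⁻` of `W = ϱ₊ ∘ ϱ₋⁻¹` and the restriction
`ϱ|_{ker P} : ker P → H₋⁺ ⊕ H₊⁻` of `ϱ = (π₋⁺ϱ₋) ⊕ (π₊⁻ϱ₊)` have equal index. -/
theorem statement4
    {X Y Hp Hm : Type*}
    [NormedAddCommGroup X] [InnerProductSpace ℂ X] [CompleteSpace X]
    [NormedAddCommGroup Y] [NormedSpace ℂ Y] [CompleteSpace Y]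
    [NormedAddCommGroup Hp] [NormedSpace ℂ Hp] [CompleteSpace Hp]
    [NormedAddCommGroup Hm] [NormedSpace ℂ Hm] [CompleteSpace Hm]
    (πpp πpm : Hp →L[ℂ] Hp) (πmp πmm : Hm →L[ℂ] Hm)
    (hπpp : πpp.comp πpp = πpp) (hπpm : πpm.comp πpm = πpm)
    (hπp : πpp + πpm = ContinuousLinearMap.id ℂ Hp)
    (hπmp : πmp.comp πmp = πmp) (hπmm : πmm.comp πmm = πmm)
    (hπm : πmp + πmm = ContinuousLinearMap.id ℂ Hm)
    (P : X →L[ℂ] Y) (ϱp : X →L[ℂ] Hp) (ϱm : X →L[ℂ] Hm)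
    (ep : X ≃L[ℂ] Hp × Y) (hep : ∀ u : X, ep u = (ϱp u, P u))
    (em : X ≃L[ℂ] Hm × Y) (hem : ∀ u : X, em u = (ϱm u, P u))
    (rm : (LinearMap.ker (P : X →ₗ[ℂ] Y)) ≃L[ℂ] Hm)
    (hrm : ∀ u : LinearMap.ker (P : X →ₗ[ℂ] Y), rm u = ϱm u) :
    EqualIndex
      (blockComponent πpm (Wop P ϱp rm) (LinearMap.range (πmm : Hm →ₗ[ℂ] Hm)))
      ((rhoOp ϱm ϱp πmp πpm).comp (Submodule.subtypeL (LinearMap.ker (P : X →ₗ[ℂ] Y)))) :=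
  statement4_general πpm πmp πmm hπmp hπm P ϱp ϱm rm hrm
end

section
/- Under the stated assumptions, and assuming in addition that both block components W^{+−} : H₋⁻ → H₊⁺ and W^{−+} : H₋⁺ → H₊⁻ are compact, let G : Y → X be any Fredholm inverse of the Fredholm operator P|_{ker ϱ} : ker ϱ → Y (viewed as an operator into X via the inclusion ker ϱ ⊆ X). Then the difference G − Q : Y → X is a compact operator, where Q := (id_X − ϱ₋⁻¹ π₋⁺ ϱ₋) ∘ P₋⁻¹. -/
/-- The operator `P₋⁻¹ := (ϱ₊ ⊕ P)⁻¹ ∘ (0 ⊕ id_Y) : Y → X`, where `ep` witnesses the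
bounded invertibility of `ϱ₊ ⊕ P : X → H₊ ⊕ Y`. -/
noncomputable def Pminus {X Y Hp : Type*}
    [NormedAddCommGroup X] [NormedSpace ℂ X] [NormedAddCommGroup Y] [NormedSpace ℂ Y]
    [NormedAddCommGroup Hp] [NormedSpace ℂ Hp]
    (ep : X ≃L[ℂ] Hp × Y) : Y →L[ℂ] X :=
  (ep.symm : Hp × Y →L[ℂ] X).comp ((0 : Y →L[ℂ] Hp).prod (ContinuousLinearMap.id ℂ Y))

/-- The operator `ϱ₋⁻¹ : H₋ → ker P ⊆ X`, viewed as a map into `X`. -/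
noncomputable def rhoMinusInv {X Y Hm : Type*}
    [NormedAddCommGroup X] [NormedSpace ℂ X] [NormedAddCommGroup Y] [NormedSpace ℂ Y]
    [NormedAddCommGroup Hm] [NormedSpace ℂ Hm]
    (P : X →L[ℂ] Y) (rm : (LinearMap.ker (P : X →ₗ[ℂ] Y)) ≃L[ℂ] Hm) : Hm →L[ℂ] X :=
  (Submodule.subtypeL (LinearMap.ker (P : X →ₗ[ℂ] Y))).comp (rm.symm : Hm →L[ℂ] LinearMap.ker (P : X →ₗ[ℂ] Y))

/-- The operator `Q := (id_X − ϱ₋⁻¹ π₋⁺ ϱ₋) ∘ P₋⁻¹ : Y → X`. -/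
noncomputable def Qop {X Y Hp Hm : Type*}
    [NormedAddCommGroup X] [NormedSpace ℂ X] [NormedAddCommGroup Y] [NormedSpace ℂ Y]
    [NormedAddCommGroup Hp] [NormedSpace ℂ Hp] [NormedAddCommGroup Hm] [NormedSpace ℂ Hm]
    (P : X →L[ℂ] Y) (ϱm : X →L[ℂ] Hm) (πmp : Hm →L[ℂ] Hm)
    (rm : (LinearMap.ker (P : X →ₗ[ℂ] Y)) ≃L[ℂ] Hm) (ep : X ≃L[ℂ] Hp × Y) : Y →L[ℂ] X :=
  (ContinuousLinearMap.id ℂ X - (rhoMinusInv P rm).comp (πmp.comp ϱm)).comp (Pminus ep)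

/-! Since `P Q = id`, for `u ∈ ker ϱ` the vector `z = u - Q (P u)` lies in `ker P`; it has
`π₋⁺ ϱ₋ z = 0`, so `ϱ₊ z = W ϱ₋ z`. Splitting `ϱ₊ z` along `π₊⁺ + π₊⁻` gives
`ϱ₊ z = W⁺⁻ (ϱ₋ z) + W⁻⁺ (π₋⁺ ϱ₋ P₋⁻¹ P u)`, and since `ϱ₊ ⊕ P` is an isomorphism and `P z = 0`,
`u ↦ z` is compact on `ker ϱ`. Writing `ι : ker ϱ → X` for the inclusion,
`ι G₀ - Q = (id - Q P) ι G₀ + Q (P ι G₀ - id)` is then a sum of two compact operators. -/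

section

variable {X Y Hp Hm : Type*}
  [NormedAddCommGroup X] [NormedSpace ℂ X] [NormedAddCommGroup Y] [NormedSpace ℂ Y]
  [NormedAddCommGroup Hp] [NormedSpace ℂ Hp] [NormedAddCommGroup Hm] [NormedSpace ℂ Hm]

theorem isCompactOperator_of_blockComponent {π : Hp →L[ℂ] Hp} {W : Hm →L[ℂ] Hp}
    {q : Hm →L[ℂ] Hm}
    (h : IsCompactOperator (blockComponent π W (LinearMap.range (q : Hm →ₗ[ℂ] Hm)))) :
    IsCompactOperator (π ∘L W ∘L q) :=
  (h.clm_comp (Submodule.subtypeL _)).comp_clm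
    (q.codRestrict _ fun x => LinearMap.mem_range_self (q : Hm →ₗ[ℂ] Hm) x)

variable {P : X →L[ℂ] Y} {ϱp : X →L[ℂ] Hp} {ϱm : X →L[ℂ] Hm} {ep : X ≃L[ℂ] Hp × Y}
  {rm : LinearMap.ker (P : X →ₗ[ℂ] Y) ≃L[ℂ] Hm}

theorem ep_Pminus (f : Y) : ep (Pminus ep f) = (0, f) := by
  simp [Pminus]

theorem P_Pminus (hep : ∀ u : X, ep u = (ϱp u, P u)) (f : Y) : P (Pminus ep f) = f := by
  simpa [ep_Pminus] using (congrArg Prod.snd (hep (Pminus ep f))).symm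

theorem rhoPlus_Pminus (hep : ∀ u : X, ep u = (ϱp u, P u)) (f : Y) : ϱp (Pminus ep f) = 0 := by
  simpa [ep_Pminus] using (congrArg Prod.fst (hep (Pminus ep f))).symm

theorem ep_symm_inl_of_P_eq_zero (hep : ∀ u : X, ep u = (ϱp u, P u)) {u : X} (hu : P u = 0) :
    ep.symm (ContinuousLinearMap.inl ℂ Hp Y (ϱp u)) = u := by
  rw [ContinuousLinearEquiv.symm_apply_eq, hep, hu]
  rfl

theorem P_rhoMinusInv (h : Hm) : P (rhoMinusInv P rm h) = 0 :=
  (rm.symm h).2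

theorem rhoMinus_rhoMinusInv (hrm : ∀ u : LinearMap.ker (P : X →ₗ[ℂ] Y), rm u = ϱm u) (h : Hm) :
    ϱm (rhoMinusInv P rm h) = h := by
  simpa [rhoMinusInv] using (hrm (rm.symm h)).symm

theorem rhoPlus_rhoMinusInv (h : Hm) : ϱp (rhoMinusInv P rm h) = Wop P ϱp rm h :=
  rfl

theorem Wop_rhoMinus_of_P_eq_zero (hrm : ∀ u : LinearMap.ker (P : X →ₗ[ℂ] Y), rm u = ϱm u)
    {z : X} (hz : P z = 0) : Wop P ϱp rm (ϱm z) = ϱp z := by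
  rw [← hrm ⟨z, hz⟩]
  simp [Wop]

theorem Qop_apply (πmp : Hm →L[ℂ] Hm) (f : Y) :
    Qop P ϱm πmp rm ep f = Pminus ep f - rhoMinusInv P rm (πmp (ϱm (Pminus ep f))) := by
  simp [Qop]

theorem P_Qop (hep : ∀ u : X, ep u = (ϱp u, P u)) (πmp : Hm →L[ℂ] Hm) (f : Y) :
    P (Qop P ϱm πmp rm ep f) = f := by
  rw [Qop_apply, map_sub, P_Pminus hep, P_rhoMinusInv, sub_zero]

theorem mem_ker_rhoOp_iff (πmp : Hm →L[ℂ] Hm) (πpm : Hp →L[ℂ] Hp) {u : X} :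
    u ∈ LinearMap.ker (rhoOp ϱm ϱp πmp πpm :
      X →ₗ[ℂ] (LinearMap.range (πmp : Hm →ₗ[ℂ] Hm) × LinearMap.range (πpm : Hp →ₗ[ℂ] Hp))) ↔
      πmp (ϱm u) = 0 ∧ πpm (ϱp u) = 0 := by
  simp only [LinearMap.mem_ker, ContinuousLinearMap.coe_coe, rhoOp, ContinuousLinearMap.prod_apply,
    Prod.mk_eq_zero, ← Submodule.coe_eq_zero]
  rfl

theorem πmp_rhoMinus_sub_Qop_P_eq_zero {πmp : Hm →L[ℂ] Hm} (hπmp : πmp.comp πmp = πmp)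
    (hrm : ∀ u : LinearMap.ker (P : X →ₗ[ℂ] Y), rm u = ϱm u) {u : X} (hu : πmp (ϱm u) = 0) :
    πmp (ϱm (u - Qop P ϱm πmp rm ep (P u))) = 0 := by
  rw [Qop_apply, map_sub, map_sub, map_sub, map_sub, rhoMinus_rhoMinusInv hrm, hu,
    ← ContinuousLinearMap.comp_apply πmp πmp, hπmp]
  abel

theorem rhoPlus_sub_Qop_P {πpp πpm : Hp →L[ℂ] Hp} {πmp πmm : Hm →L[ℂ] Hm}
    (hπp : πpp + πpm = ContinuousLinearMap.id ℂ Hp) (hπmp : πmp.comp πmp = πmp)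
    (hπm : πmp + πmm = ContinuousLinearMap.id ℂ Hm) (hep : ∀ u : X, ep u = (ϱp u, P u))
    (hrm : ∀ u : LinearMap.ker (P : X →ₗ[ℂ] Y), rm u = ϱm u) {u : X}
    (hu : πmp (ϱm u) = 0 ∧ πpm (ϱp u) = 0) :
    ϱp (u - Qop P ϱm πmp rm ep (P u)) =
      (πpp ∘L Wop P ϱp rm ∘L πmm) (ϱm (u - Qop P ϱm πmp rm ep (P u))) +
        (πpm ∘L Wop P ϱp rm ∘L πmp) (ϱm (Pminus ep (P u))) := by
  set z := u - Qop P ϱm πmp rm ep (P u) with hz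
  have hPz : P z = 0 := by rw [hz, map_sub, P_Qop hep, sub_self]
  have hπmp_z : πmp (ϱm z) = 0 := πmp_rhoMinus_sub_Qop_P_eq_zero hπmp hrm hu.1
  have hπmm : πmm (ϱm z) = ϱm z := by
    simpa [hπmp_z] using congrArg (· (ϱm z)) hπm
  have hplus : πpp (ϱp z) = πpp (Wop P ϱp rm (πmm (ϱm z))) := by
    rw [hπmm, Wop_rhoMinus_of_P_eq_zero hrm hPz]
  have hminus : πpm (ϱp z) = πpm (Wop P ϱp rm (πmp (ϱm (Pminus ep (P u))))) := by
    simp only [hz, Qop_apply, map_sub, rhoPlus_Pminus hep, rhoPlus_rhoMinusInv, hu.2]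
    simp
  calc ϱp z = πpp (ϱp z) + πpm (ϱp z) := by simpa using (congrArg (· (ϱp z)) hπp).symm
    _ = _ := by rw [hplus, hminus]; rfl

theorem isCompactOperator_id_sub_Qop_comp_P_comp_subtypeL_ker_rhoOp
    {πpp πpm : Hp →L[ℂ] Hp} {πmp πmm : Hm →L[ℂ] Hm}
    (hπp : πpp + πpm = ContinuousLinearMap.id ℂ Hp) (hπmp : πmp.comp πmp = πmp)
    (hπm : πmp + πmm = ContinuousLinearMap.id ℂ Hm) (hep : ∀ u : X, ep u = (ϱp u, P u))
    (hrm : ∀ u : LinearMap.ker (P : X →ₗ[ℂ] Y), rm u = ϱm u)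
    (hcompactPM :
      IsCompactOperator ⇑(blockComponent πpp (Wop P ϱp rm) (LinearMap.range (πmm : Hm →ₗ[ℂ] Hm))))
    (hcompactMP :
      IsCompactOperator ⇑(blockComponent πpm (Wop P ϱp rm) (LinearMap.range (πmp : Hm →ₗ[ℂ] Hm)))) :
    IsCompactOperator ⇑((ContinuousLinearMap.id ℂ X - (Qop P ϱm πmp rm ep).comp P).comp
      (Submodule.subtypeL (LinearMap.ker (rhoOp ϱm ϱp πmp πpm :
        X →ₗ[ℂ] (LinearMap.range (πmp : Hm →ₗ[ℂ] Hm) × LinearMap.range (πpm : Hp →ₗ[ℂ] Hp)))))) := by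
  set ι := Submodule.subtypeL (LinearMap.ker (rhoOp ϱm ϱp πmp πpm :
    X →ₗ[ℂ] (LinearMap.range (πmp : Hm →ₗ[ℂ] Hm) × LinearMap.range (πpm : Hp →ₗ[ℂ] Hp))))
  set D := (ContinuousLinearMap.id ℂ X - (Qop P ϱm πmp rm ep).comp P).comp ι
  have hD_eq : D = ((ep.symm : Hp × Y →L[ℂ] X) ∘L ContinuousLinearMap.inl ℂ Hp Y) ∘L
      ((πpp ∘L Wop P ϱp rm ∘L πmm) ∘L ϱm ∘L D +
        (πpm ∘L Wop P ϱp rm ∘L πmp) ∘L ϱm ∘L Pminus ep ∘L P ∘L ι) := by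
    ext x
    have hDx : D x = (x : X) - Qop P ϱm πmp rm ep (P x) := rfl
    have hPDx : P (D x) = 0 := by rw [hDx, map_sub, P_Qop hep, sub_self]
    rw [← ep_symm_inl_of_P_eq_zero hep hPDx, hDx,
      rhoPlus_sub_Qop_P hπp hπmp hπm hep hrm ((mem_ker_rhoOp_iff πmp πpm).1 x.2)]
    rfl
  rw [hD_eq, ContinuousLinearMap.coe_comp]
  refine IsCompactOperator.clm_comp ?_ _
  rw [FunLike.coe_add]
  exact ((isCompactOperator_of_blockComponent hcompactPM).comp_clm _).add
    ((isCompactOperator_of_blockComponent hcompactMP).comp_clm _)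

end

theorem statement7_general
    {X Y Hp Hm : Type*}
    [NormedAddCommGroup X] [InnerProductSpace ℂ X]
    [NormedAddCommGroup Y] [NormedSpace ℂ Y]
    [NormedAddCommGroup Hp] [NormedSpace ℂ Hp]
    [NormedAddCommGroup Hm] [NormedSpace ℂ Hm]
    (πpp πpm : Hp →L[ℂ] Hp) (πmp πmm : Hm →L[ℂ] Hm)
    (hπp : πpp + πpm = ContinuousLinearMap.id ℂ Hp)
    (hπmp : πmp.comp πmp = πmp)
    (hπm : πmp + πmm = ContinuousLinearMap.id ℂ Hm)
    (P : X →L[ℂ] Y) (ϱp : X →L[ℂ] Hp) (ϱm : X →L[ℂ] Hm)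
    (ep : X ≃L[ℂ] Hp × Y) (hep : ∀ u : X, ep u = (ϱp u, P u))
    (rm : (LinearMap.ker (P : X →ₗ[ℂ] Y)) ≃L[ℂ] Hm)
    (hrm : ∀ u : LinearMap.ker (P : X →ₗ[ℂ] Y), rm u = ϱm u)
    (hcompactPM :
      IsCompactOperator ⇑(blockComponent πpp (Wop P ϱp rm) (LinearMap.range (πmm : Hm →ₗ[ℂ] Hm))))
    (hcompactMP :
      IsCompactOperator ⇑(blockComponent πpm (Wop P ϱp rm) (LinearMap.range (πmp : Hm →ₗ[ℂ] Hm))))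
    (G₀ : Y →L[ℂ] (LinearMap.ker (rhoOp ϱm ϱp πmp πpm :
        X →ₗ[ℂ] (LinearMap.range (πmp : Hm →ₗ[ℂ] Hm) × LinearMap.range (πpm : Hp →ₗ[ℂ] Hp)))))
    (hG₀r : IsCompactOperator
      ⇑((P.comp (Submodule.subtypeL (LinearMap.ker (rhoOp ϱm ϱp πmp πpm :
        X →ₗ[ℂ] (LinearMap.range (πmp : Hm →ₗ[ℂ] Hm) × LinearMap.range (πpm : Hp →ₗ[ℂ] Hp)))))).comp G₀ -
        ContinuousLinearMap.id ℂ Y)) :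
    IsCompactOperator
      ⇑((Submodule.subtypeL (LinearMap.ker (rhoOp ϱm ϱp πmp πpm :
        X →ₗ[ℂ] (LinearMap.range (πmp : Hm →ₗ[ℂ] Hm) × LinearMap.range (πpm : Hp →ₗ[ℂ] Hp))))).comp G₀ -
        Qop P ϱm πmp rm ep) := by
  set ι := Submodule.subtypeL (LinearMap.ker (rhoOp ϱm ϱp πmp πpm :
    X →ₗ[ℂ] (LinearMap.range (πmp : Hm →ₗ[ℂ] Hm) × LinearMap.range (πpm : Hp →ₗ[ℂ] Hp))))
  set Q := Qop P ϱm πmp rm ep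
  have hsplit : ι ∘L G₀ - Q =
      ((ContinuousLinearMap.id ℂ X - Q ∘L P) ∘L ι) ∘L G₀ +
        Q ∘L ((P ∘L ι) ∘L G₀ - ContinuousLinearMap.id ℂ Y) := by
    ext f
    simp only [sub_apply, add_apply, ContinuousLinearMap.comp_apply, ContinuousLinearMap.id_apply,
      map_sub]
    abel
  rw [hsplit, FunLike.coe_add]
  exact ((isCompactOperator_id_sub_Qop_comp_P_comp_subtypeL_ker_rhoOp hπp hπmp hπm hep hrm
    hcompactPM hcompactMP).comp_clm G₀).add (hG₀r.clm_comp Q)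

/-- If both block components `W⁺⁻` and `W⁻⁺` are compact and `G : Y → X` is any Fredholm
inverse of `P|_{ker ϱ} : ker ϱ → Y` (viewed as an operator into `X` via the inclusion
`ker ϱ ⊆ X`, i.e. `G = incl ∘ G₀` with `G₀ : Y → ker ϱ` a Fredholm inverse), then
`G − Q : Y → X` is compact, where `Q := (id_X − ϱ₋⁻¹ π₋⁺ ϱ₋) ∘ P₋⁻¹`. -/
theorem statement7
    {X Y Hp Hm : Type*}
    [NormedAddCommGroup X] [InnerProductSpace ℂ X] [CompleteSpace X]
    [NormedAddCommGroup Y] [NormedSpace ℂ Y] [CompleteSpace Y]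
    [NormedAddCommGroup Hp] [NormedSpace ℂ Hp] [CompleteSpace Hp]
    [NormedAddCommGroup Hm] [NormedSpace ℂ Hm] [CompleteSpace Hm]
    (πpp πpm : Hp →L[ℂ] Hp) (πmp πmm : Hm →L[ℂ] Hm)
    (hπpp : πpp.comp πpp = πpp) (hπpm : πpm.comp πpm = πpm)
    (hπp : πpp + πpm = ContinuousLinearMap.id ℂ Hp)
    (hπmp : πmp.comp πmp = πmp) (hπmm : πmm.comp πmm = πmm)
    (hπm : πmp + πmm = ContinuousLinearMap.id ℂ Hm)
    (P : X →L[ℂ] Y) (ϱp : X →L[ℂ] Hp) (ϱm : X →L[ℂ] Hm)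
    (ep : X ≃L[ℂ] Hp × Y) (hep : ∀ u : X, ep u = (ϱp u, P u))
    (em : X ≃L[ℂ] Hm × Y) (hem : ∀ u : X, em u = (ϱm u, P u))
    (rm : (LinearMap.ker (P : X →ₗ[ℂ] Y)) ≃L[ℂ] Hm)
    (hrm : ∀ u : LinearMap.ker (P : X →ₗ[ℂ] Y), rm u = ϱm u)
    (hcompactPM :
      IsCompactOperator ⇑(blockComponent πpp (Wop P ϱp rm) (LinearMap.range (πmm : Hm →ₗ[ℂ] Hm))))
    (hcompactMP :
      IsCompactOperator ⇑(blockComponent πpm (Wop P ϱp rm) (LinearMap.range (πmp : Hm →ₗ[ℂ] Hm))))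
    (G₀ : Y →L[ℂ] (LinearMap.ker (rhoOp ϱm ϱp πmp πpm :
        X →ₗ[ℂ] (LinearMap.range (πmp : Hm →ₗ[ℂ] Hm) × LinearMap.range (πpm : Hp →ₗ[ℂ] Hp)))))
    (hG₀r : IsCompactOperator
      ⇑((P.comp (Submodule.subtypeL (LinearMap.ker (rhoOp ϱm ϱp πmp πpm :
        X →ₗ[ℂ] (LinearMap.range (πmp : Hm →ₗ[ℂ] Hm) × LinearMap.range (πpm : Hp →ₗ[ℂ] Hp)))))).comp G₀ -
        ContinuousLinearMap.id ℂ Y))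
    (hG₀l : IsCompactOperator
      ⇑(G₀.comp (P.comp (Submodule.subtypeL (LinearMap.ker (rhoOp ϱm ϱp πmp πpm :
        X →ₗ[ℂ] (LinearMap.range (πmp : Hm →ₗ[ℂ] Hm) × LinearMap.range (πpm : Hp →ₗ[ℂ] Hp)))))) -
        ContinuousLinearMap.id ℂ (LinearMap.ker (rhoOp ϱm ϱp πmp πpm :
        X →ₗ[ℂ] (LinearMap.range (πmp : Hm →ₗ[ℂ] Hm) × LinearMap.range (πpm : Hp →ₗ[ℂ] Hp)))))) :
    IsCompactOperator
      ⇑((Submodule.subtypeL (LinearMap.ker (rhoOp ϱm ϱp πmp πpm :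
        X →ₗ[ℂ] (LinearMap.range (πmp : Hm →ₗ[ℂ] Hm) × LinearMap.range (πpm : Hp →ₗ[ℂ] Hp))))).comp G₀ -
        Qop P ϱm πmp rm ep) :=
  statement7_general πpp πpm πmp πmm hπp hπmp hπm P ϱp ϱm ep hep rm hrm hcompactPM hcompactMP G₀
    hG₀r
end
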